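/- arXiv:2112.00205 — 2 statements merged into one kernel-verified Lean document; each statement's English description precedes it below -/
import Mathlib

section
/- Let P : E → B be a pseudofunctor between bicategories that is a 1-fibration (in particular P could be a fibration). If B is pseudocofiltered, i.e., B satisfies (0-pFlt^op): for any 1-cells u : A → C and v : B → C there exist an object D and 1-cells r : D → A, s : D → B; (1-pFlt^op): for any parallel 1-cells f, g : A → B there exist an object C, a 1-cell u : C → A and a 2-cell γ : f ∘ u ⟹ g ∘ u; and (2-pFlt^op): for any parallel 2-cells α, β : f ⟹ g : A → B there exist an object C and a 1-cell u : C → A with α ▷ u = β ▷ u; then the class of all P-Cartesian 1-cells of E admits a right bicalculus of fractions. -/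
open CategoryTheory Bicategory

universe w₁ v₁ u₁ w₂ v₂ u₂ w v u

namespace Paper

section Fractions

variable (B : Type u) [Bicategory.{w, v} B]

/-- A 1-cell is an equivalence if there is a 1-cell in the opposite direction and invertible
2-cells relating the two composites to identities. -/
def IsEquiv1Cell {a b : B} (f : a ⟶ b) : Prop :=
  ∃ g : b ⟶ a, Nonempty (f ≫ g ≅ 𝟙 a) ∧ Nonempty (g ≫ f ≅ 𝟙 b)

/-- Axiom (0-Frc). -/
def Frc0 (W : ∀ ⦃a b : B⦄, (a ⟶ b) → Prop) : Prop :=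
  ∀ ⦃A B' C : B⦄ (w : A ⟶ B') (f : C ⟶ B'), W w →
    ∃ (D : B) (u : D ⟶ C) (h : D ⟶ A), W u ∧ Nonempty (u ≫ f ≅ h ≫ w)

/-- Axiom (1-Frc). -/
def Frc1 (W : ∀ ⦃a b : B⦄, (a ⟶ b) → Prop) : Prop :=
  ∀ ⦃B' C D : B⦄ (w : C ⟶ D) (f g : B' ⟶ C), W w → ∀ α : f ≫ w ⟶ g ≫ w,
    ∃ (A : B) (u : A ⟶ B'), W u ∧ ∃ β : u ≫ f ⟶ u ≫ g,
      (u ◁ α) ≫ (α_ u g w).inv = (α_ u f w).inv ≫ (β ▷ w)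

/-- Axiom (2-Frc). -/
def Frc2 (W : ∀ ⦃a b : B⦄, (a ⟶ b) → Prop) : Prop :=
  ∀ ⦃B' C D : B⦄ (w : C ⟶ D) (f g : B' ⟶ C), W w → ∀ α β : f ⟶ g,
    α ▷ w = β ▷ w → ∃ (A : B) (u : A ⟶ B'), W u ∧ u ◁ α = u ◁ β

/-- A class of 1-cells admits a right bicalculus of fractions. -/
structure RightBicalculus (W : ∀ ⦃a b : B⦄, (a ⟶ b) → Prop) : Prop where
  equivalences : ∀ ⦃a b : B⦄ (f : a ⟶ b), IsEquiv1Cell B f → W f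
  comp : ∀ ⦃a b c : B⦄ (f : a ⟶ b) (g : b ⟶ c), W f → W g → W (f ≫ g)
  iso_closed : ∀ ⦃a b : B⦄ (f w : a ⟶ b), W w → Nonempty (f ≅ w) → W f
  frc0 : Frc0 B W
  frc1 : Frc1 B W
  frc2 : Frc2 B W

end Fractions

section Cartesian

variable {E : Type u₁} [Bicategory.{w₁, v₁} E] {B : Type u₂} [Bicategory.{w₂, v₂} B]

/-- A 1-cell `f : X ⟶ Y` of `E` is `P`-Cartesian. -/
def IsCartesian (P : Pseudofunctor E B) {X Y : E} (f : X ⟶ Y) : Prop :=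
  (∀ (Z : E) (g : Z ⟶ Y) (h : P.obj Z ⟶ P.obj X) (α : h ≫ P.map f ≅ P.map g),
    ∃ (hHat : Z ⟶ X) (aHat : hHat ≫ f ≅ g) (bHat : P.map hHat ≅ h),
      (bHat.hom ▷ P.map f) ≫ α.hom = (P.mapComp hHat f).inv ≫ P.map₂ aHat.hom) ∧
  (∀ (Z : E) (g h : Z ⟶ X) (α : g ≫ f ⟶ h ≫ f) (β : P.map g ⟶ P.map h),
    P.map₂ α = (P.mapComp g f).hom ≫ (β ▷ P.map f) ≫ (P.mapComp h f).inv →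
      ∃ bHat : g ⟶ h, P.map₂ bHat = β ∧ bHat ▷ f = α) ∧
  (∀ (Z : E) (g h : Z ⟶ X) (α β : g ⟶ h), P.map₂ α = P.map₂ β → α ▷ f = β ▷ f → α = β)

/-- `P` is a 1-fibration: every 1-cell into the image of an object admits a Cartesian lift. -/
def Is1Fibration (P : Pseudofunctor E B) : Prop :=
  ∀ (E₀ : E) ⦃B₀ : B⦄ (f : B₀ ⟶ P.obj E₀),
    ∃ (Bhat : E) (fhat : Bhat ⟶ E₀) (hB : P.obj Bhat = B₀),
      IsCartesian P fhat ∧ P.map fhat = cast (congrArg (fun x => (x ⟶ P.obj E₀)) hB.symm) f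

end Cartesian

/-!
Each of the axioms (0-Frc), (1-Frc), (2-Frc) holds in `B` for the class of *all* 1-cells: this
is pseudocofilteredness, once the 2-cell supplied by (1-pFlt^op) has been made invertible by
restricting further. The axioms then lift to the Cartesian 1-cells of `E`: the restricting 1-cell
`u` found in `B` has a Cartesian lift `û`, and the universal properties of the given Cartesian
`w` turn the data over `P û` into data over `û`. Equivalences are Cartesian because whiskering
with an equivalence is fully faithful on 2-cells; Cartesian 1-cells compose and are closed under
isomorphism by stacking their universal properties.
-/

section Equivalences

variable {B : Type u} [Bicategory.{w, v} B]

def postcompEquivalence (Z : B) {a b : B} {f : a ⟶ b} {g : b ⟶ a} (unit : f ≫ g ≅ 𝟙 a)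
    (counit : g ≫ f ≅ 𝟙 b) : (Z ⟶ a) ≌ (Z ⟶ b) :=
  CategoryTheory.Equivalence.mk (postcomp Z f) (postcomp Z g)
    ((rightUnitorNatIso Z a).symm ≪≫ (postcomposing Z a a).mapIso unit.symm ≪≫
      (associatorNatIsoLeft Z f g).symm)
    (associatorNatIsoLeft Z g f ≪≫ (postcomposing Z b b).mapIso counit ≪≫ rightUnitorNatIso Z b)

noncomputable def IsEquiv1Cell.postcompFullyFaithful {a b : B} {f : a ⟶ b}
    (hf : IsEquiv1Cell B f) (Z : B) : (postcomp Z f).FullyFaithful :=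
  (postcompEquivalence Z hf.choose_spec.1.some hf.choose_spec.2.some).fullyFaithfulFunctor

lemma IsEquiv1Cell.map {E : Type u₁} [Bicategory.{w₁, v₁} E] (P : Pseudofunctor E B) {a b : E}
    {f : a ⟶ b} (hf : IsEquiv1Cell E f) : IsEquiv1Cell B (P.map f) := by
  obtain ⟨g, ⟨unit⟩, ⟨counit⟩⟩ := hf
  exact ⟨P.map g, ⟨(P.mapComp f g).symm ≪≫ P.map₂Iso unit ≪≫ P.mapId a⟩,
    ⟨(P.mapComp g f).symm ≪≫ P.map₂Iso counit ≪≫ P.mapId b⟩⟩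

end Equivalences

section Pseudocofiltered

variable {B : Type u} [Bicategory.{w, v} B]

lemma exists_isIso_whiskerLeft
    (h1 : ∀ ⦃A B' : B⦄ (f g : A ⟶ B'), ∃ (C : B) (u : C ⟶ A) (_ : u ≫ f ⟶ u ≫ g), True)
    (h2 : ∀ ⦃A B' : B⦄ (f g : A ⟶ B') (α β : f ⟶ g), ∃ (C : B) (u : C ⟶ A), u ◁ α = u ◁ β)
    {a b : B} {x y : a ⟶ b} (γ : x ⟶ y) : ∃ (C : B) (u : C ⟶ a), IsIso (u ◁ γ) := by
  -- a 2-cell `δ` in the opposite direction becomes a two-sided inverse of `γ` after two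
  -- restrictions that equalise `γ ≫ δ` and `δ ≫ γ` with identities
  obtain ⟨C₁, u₁, δ, -⟩ := h1 y x
  obtain ⟨C₂, u₂, hγδ⟩ := h2 _ _ ((u₁ ◁ γ) ≫ δ) (𝟙 _)
  obtain ⟨C₃, u₃, hδγ⟩ := h2 _ _ (u₂ ◁ (δ ≫ (u₁ ◁ γ))) (𝟙 _)
  refine ⟨C₃, (u₃ ≫ u₂) ≫ u₁, ?_⟩
  have : IsIso (u₃ ◁ u₂ ◁ u₁ ◁ γ) :=
    ⟨u₃ ◁ u₂ ◁ δ, by rw [← whiskerLeft_comp, ← whiskerLeft_comp, hγδ]; simp,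
      by rw [← whiskerLeft_comp, ← whiskerLeft_comp, hδγ]; simp⟩
  rw [comp_whiskerLeft, comp_whiskerLeft]
  infer_instance

lemma frc0_of_pseudocofiltered
    (h0 : ∀ ⦃A B' C : B⦄ (_ : A ⟶ C) (_ : B' ⟶ C), ∃ (D : B) (_ : D ⟶ A) (_ : D ⟶ B'), True)
    (h1 : ∀ ⦃A B' : B⦄ (f g : A ⟶ B'), ∃ (C : B) (u : C ⟶ A) (_ : u ≫ f ⟶ u ≫ g), True)
    (h2 : ∀ ⦃A B' : B⦄ (f g : A ⟶ B') (α β : f ⟶ g), ∃ (C : B) (u : C ⟶ A), u ◁ α = u ◁ β) :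
    Frc0 B fun _ _ _ => True := by
  intro A B' C w f _
  obtain ⟨D₀, r, s, -⟩ := h0 f w
  obtain ⟨D₁, u₁, γ, -⟩ := h1 (r ≫ f) (s ≫ w)
  obtain ⟨D, u, _⟩ := exists_isIso_whiskerLeft h1 h2 γ
  exact ⟨D, u ≫ u₁ ≫ r, u ≫ u₁ ≫ s, trivial,
    ⟨α_ _ _ _ ≪≫ whiskerLeftIso u (α_ _ _ _) ≪≫ asIso (u ◁ γ) ≪≫
      (α_ _ _ _ ≪≫ whiskerLeftIso u (α_ _ _ _)).symm⟩⟩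

lemma frc1_of_pseudocofiltered
    (h1 : ∀ ⦃A B' : B⦄ (f g : A ⟶ B'), ∃ (C : B) (u : C ⟶ A) (_ : u ≫ f ⟶ u ≫ g), True)
    (h2 : ∀ ⦃A B' : B⦄ (f g : A ⟶ B') (α β : f ⟶ g), ∃ (C : B) (u : C ⟶ A), u ◁ α = u ◁ β) :
    Frc1 B fun _ _ _ => True := by
  intro B' C D w f g _ α
  obtain ⟨A₁, u₁, δ, -⟩ := h1 f g
  obtain ⟨A, u, hu⟩ := h2 _ _ (u₁ ◁ α) ((α_ u₁ f w).inv ≫ δ ▷ w ≫ (α_ u₁ g w).hom)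
  refine ⟨A, u ≫ u₁, trivial, (α_ u u₁ f).hom ≫ u ◁ δ ≫ (α_ u u₁ g).inv, ?_⟩
  rw [comp_whiskerLeft, hu]
  bicategory

lemma frc2_of_pseudocofiltered
    (h2 : ∀ ⦃A B' : B⦄ (f g : A ⟶ B') (α β : f ⟶ g), ∃ (C : B) (u : C ⟶ A), u ◁ α = u ◁ β) :
    Frc2 B fun _ _ _ => True := by
  intro B' C D w f g _ α β _
  obtain ⟨A, u, hu⟩ := h2 f g α β
  exact ⟨A, u, trivial, hu⟩

end Pseudocofiltered

section CartesianCells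

variable {E : Type u₁} [Bicategory.{w₁, v₁} E] {B : Type u₂} [Bicategory.{w₂, v₂} B]
  {P : Pseudofunctor E B}

lemma map₂_associator_inv {a b c d : E} (f : a ⟶ b) (g : b ⟶ c)
    (h : c ⟶ d) :
    P.map₂ (α_ f g h).inv = (P.mapComp f (g ≫ h)).hom ≫ P.map f ◁ (P.mapComp g h).hom ≫
      (α_ (P.map f) (P.map g) (P.map h)).inv ≫ (P.mapComp f g).inv ▷ P.map h ≫
      (P.mapComp (f ≫ g) h).inv := by
  rw [← cancel_epi (P.map₂ (α_ f g h).hom), ← P.map₂_comp]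
  simp

lemma isCartesian_of_isEquiv1Cell {X Y : E} {f : X ⟶ Y} (hf : IsEquiv1Cell E f) :
    IsCartesian P f := by
  have hPf := (hf.map P).postcompFullyFaithful
  refine ⟨fun Z g h α => ?_, fun Z g h α β hαβ => ?_, fun Z g h α β _ hαβ => ?_⟩
  · obtain ⟨f', -, ⟨counit⟩⟩ := hf
    let aHat : (g ≫ f') ≫ f ≅ g := α_ g f' f ≪≫ whiskerLeftIso g counit ≪≫ ρ_ g
    let Θ := (P.mapComp (g ≫ f') f).symm ≪≫ P.map₂Iso aHat ≪≫ α.symm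
    refine ⟨g ≫ f', aHat, (hPf _).preimageIso Θ, ?_⟩
    have hΘ : ((hPf _).preimageIso Θ).hom ▷ P.map f = Θ.hom := (hPf _).map_preimage Θ.hom
    simp [hΘ, Θ]
  · let bHat := (hf.postcompFullyFaithful Z).preimage α
    have hb : bHat ▷ f = α := (hf.postcompFullyFaithful Z).map_preimage α
    refine ⟨bHat, (hPf _).map_injective ?_, hb⟩
    have := P.map₂_whisker_right bHat f
    rw [hb, hαβ, cancel_epi, cancel_mono] at this
    exact this.symm
  · exact (hf.postcompFullyFaithful Z).map_injective hαβ

lemma IsCartesian.comp {X Y Z' : E} {f : X ⟶ Y} {g : Y ⟶ Z'}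
    (hf : IsCartesian P f) (hg : IsCartesian P g) : IsCartesian P (f ≫ g) := by
  obtain ⟨f1, f2, f3⟩ := hf
  obtain ⟨g1, g2, g3⟩ := hg
  refine ⟨fun Z c h α => ?_, fun Z s t α β hαβ => ?_, fun Z s t α β hm hw => ?_⟩
  · obtain ⟨c₁, a₁, b₁, e₁⟩ := g1 Z c (h ≫ P.map f)
      (α_ _ _ _ ≪≫ whiskerLeftIso h (P.mapComp f g).symm ≪≫ α)
    obtain ⟨hHat, a₂, b₂, e₂⟩ := f1 Z c₁ h b₁.symm
    refine ⟨hHat, (α_ hHat f g).symm ≪≫ whiskerRightIso a₂ g ≪≫ a₁, b₂, ?_⟩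
    rw [Iso.eq_inv_comp] at e₁ e₂
    simp only [Iso.trans_hom, Iso.symm_hom, whiskerRightIso_hom, PrelaxFunctor.map₂_comp,
      map₂_associator_inv, P.map₂_whisker_right, ← e₁, ← e₂]
    simp only [Iso.symm_hom, whiskerLeftIso_hom, comp_whiskerRight, Category.assoc,
      Iso.inv_hom_id_assoc, inv_hom_whiskerRight_assoc]
    rw [← associator_inv_naturality_left_assoc, Iso.inv_hom_id_assoc, whisker_exchange_assoc]
    simp
  · obtain ⟨γ, hγ, hγα⟩ := g2 Z (s ≫ f) (t ≫ f) ((α_ s f g).hom ≫ α ≫ (α_ t f g).inv)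
      ((P.mapComp s f).hom ≫ (β ▷ P.map f) ≫ (P.mapComp t f).inv) (by
        simp only [PrelaxFunctor.map₂_comp, hαβ, P.map₂_associator, map₂_associator_inv]
        simp only [Category.assoc, Iso.inv_hom_id_assoc, comp_whiskerRight]
        rw [whisker_exchange_assoc]
        simp)
    obtain ⟨bHat, hbβ, hbγ⟩ := f2 Z s t γ β hγ
    refine ⟨bHat, hbβ, ?_⟩
    rw [whiskerRight_comp, hbγ, hγα]
    simp
  · refine f3 _ _ _ _ _ hm (g3 _ _ _ _ _ ?_ ?_)
    · simp [hm]
    · simpa using hw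

lemma IsCartesian.of_iso {X Y : E} {f w : X ⟶ Y} (hw : IsCartesian P w) (ι : f ≅ w) :
    IsCartesian P f := by
  obtain ⟨w1, w2, w3⟩ := hw
  refine ⟨fun Z c h α => ?_, fun Z s t α β hαβ => ?_, fun Z s t α β hm hwh => ?_⟩
  · obtain ⟨hHat, aHat, bHat, e⟩ := w1 Z c h (whiskerLeftIso h (P.map₂Iso ι).symm ≪≫ α)
    refine ⟨hHat, whiskerLeftIso hHat ι ≪≫ aHat, bHat, ?_⟩
    rw [Iso.eq_inv_comp] at e
    simp [← e, whisker_exchange_assoc, ← whiskerLeft_comp_assoc]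
  · obtain ⟨bHat, hbβ, hbα⟩ := w2 Z s t ((s ◁ ι.inv) ≫ α ≫ (t ◁ ι.hom)) β (by
      simp [hαβ, whisker_exchange_assoc, ← whiskerLeft_comp_assoc])
    refine ⟨bHat, hbβ, ?_⟩
    rw [← cancel_mono (t ◁ ι.hom), ← whisker_exchange, hbα]
    simp
  · refine w3 Z s t α β hm ?_
    rw [← cancel_epi (s ◁ ι.hom), whisker_exchange, whisker_exchange, hwh]

end CartesianCells

section Transfer

variable {E : Type u₁} [Bicategory.{w₁, v₁} E] {B : Type u₂} [Bicategory.{w₂, v₂} B]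
  {P : Pseudofunctor E B}

/-- Stated for an arbitrary property `Φ` of 1-cells so that callers never transport along the
equation `P.obj X = C` provided by `Is1Fibration`. -/
lemma Is1Fibration.exists_isCartesian_map (hP : Is1Fibration P) {E₀ : E}
    (Φ : ∀ {C : B}, (C ⟶ P.obj E₀) → Prop) {C : B} {u : C ⟶ P.obj E₀} (hu : Φ u) :
    ∃ (X : E) (x : X ⟶ E₀), IsCartesian P x ∧ Φ (P.map x) := by
  obtain ⟨X, x, rfl, hx, hxu⟩ := hP E₀ u
  exact ⟨X, x, hx, hxu ▸ hu⟩

lemma Is1Fibration.frc0 (hP : Is1Fibration P) (hB : Frc0 B fun _ _ _ => True) :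
    Frc0 E fun _ _ f => IsCartesian P f := by
  intro A B' C w f hw
  obtain ⟨_, _, h, -, hu⟩ := hB (P.map w) (P.map f) trivial
  obtain ⟨D, u, hu, h, ⟨ι⟩⟩ := hP.exists_isCartesian_map
    (fun u => ∃ h : _ ⟶ P.obj A, Nonempty (u ≫ P.map f ≅ h ≫ P.map w)) ⟨h, hu⟩
  obtain ⟨hHat, aHat, -, -⟩ := hw.1 D (u ≫ f) h (ι.symm ≪≫ (P.mapComp u f).symm)
  exact ⟨D, u, hHat, hu, ⟨aHat.symm⟩⟩

lemma Is1Fibration.frc1 (hP : Is1Fibration P) (hB : Frc1 B fun _ _ _ => True) :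
    Frc1 E fun _ _ f => IsCartesian P f := by
  intro B' C D w f g hw α
  let α₀ := (P.mapComp f w).inv ≫ P.map₂ α ≫ (P.mapComp g w).hom
  obtain ⟨_, _, -, hu⟩ := hB (P.map w) (P.map f) (P.map g) trivial α₀
  obtain ⟨A, u, hu, δ, hδ⟩ := hP.exists_isCartesian_map
    (fun u => ∃ δ : u ≫ P.map f ⟶ u ≫ P.map g,
      (u ◁ α₀) ≫ (α_ u (P.map g) (P.map w)).inv = (α_ u (P.map f) (P.map w)).inv ≫ (δ ▷ P.map w))
    hu
  obtain ⟨β, -, hβ⟩ := hw.2.1 A (u ≫ f) (u ≫ g) ((α_ u f w).hom ≫ (u ◁ α) ≫ (α_ u g w).inv)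
    ((P.mapComp u f).hom ≫ δ ≫ (P.mapComp u g).inv) (by
      rw [eq_comm, Iso.inv_comp_eq] at hδ
      simp [hδ, α₀, map₂_associator_inv])
  refine ⟨A, u, hu, β, ?_⟩
  rw [hβ]
  simp

lemma Is1Fibration.frc2 (hP : Is1Fibration P) (hB : Frc2 B fun _ _ _ => True) :
    Frc2 E fun _ _ f => IsCartesian P f := by
  intro B' C D w f g hw α β hαβ
  obtain ⟨_, _, -, hu⟩ := hB (P.map w) (P.map f) (P.map g) trivial (P.map₂ α) (P.map₂ β) (by
    simpa using congrArg P.map₂ hαβ)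
  obtain ⟨A, u, hu, hαβu⟩ := hP.exists_isCartesian_map (fun u => u ◁ P.map₂ α = u ◁ P.map₂ β) hu
  refine ⟨A, u, hu, hw.2.2 A (u ≫ f) (u ≫ g) (u ◁ α) (u ◁ β) ?_ ?_⟩
  · simp [hαβu]
  · rw [whisker_assoc, whisker_assoc, hαβ]

end Transfer

/-- If `P : E ⥤ B` is a 1-fibration and `B` is pseudocofiltered, then the class of all
`P`-Cartesian 1-cells of `E` admits a right bicalculus of fractions. -/
theorem cartesians_fractions_of_pseudocofiltered {E : Type u₁} [Bicategory.{w₁, v₁} E]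
    {B : Type u₂} [Bicategory.{w₂, v₂} B]
    (P : Pseudofunctor E B) (hP : Is1Fibration P)
    (h0 : ∀ ⦃A B' C : B⦄ (_ : A ⟶ C) (_ : B' ⟶ C), ∃ (D : B) (_ : D ⟶ A) (_ : D ⟶ B'), True)
    (h1 : ∀ ⦃A B' : B⦄ (f g : A ⟶ B'), ∃ (C : B) (u : C ⟶ A) (_ : u ≫ f ⟶ u ≫ g), True)
    (h2 : ∀ ⦃A B' : B⦄ (f g : A ⟶ B') (α β : f ⟶ g), ∃ (C : B) (u : C ⟶ A), u ◁ α = u ◁ β) :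
    RightBicalculus E (fun _ _ f => IsCartesian P f) :=
  ⟨fun _ _ _ hf => isCartesian_of_isEquiv1Cell hf, fun _ _ _ _ _ hf hg => hf.comp hg,
    fun _ _ _ _ hw ι => hw.of_iso ι.some, hP.frc0 (frc0_of_pseudocofiltered h0 h1 h2),
    hP.frc1 (frc1_of_pseudocofiltered h1 h2), hP.frc2 (frc2_of_pseudocofiltered h2)⟩

end Paper
end

section
/- Let W be a class of 1-cells of a bicategory B that admits a right bicalculus of fractions, and let A be an object of B. Then the slice bicategory W/A is cofiltered: it is non-empty and satisfies the dual filtered axioms, namely (0-Flt^op): for any objects X, Y of W/A there exist an object Z and 1-cells Z → X and Z → Y; (1-Flt^op): for any parallel 1-cells F, G : X → Y of W/A there exist an object Z, a 1-cell U : Z → X and a 2-cell F ∘ U ⟹ G ∘ U; (2-Flt^op): for any parallel 2-cells Ξ, Θ : F ⟹ G : X → Y of W/A there exist an object Z and a 1-cell U : Z → X with Ξ ▷ U = Θ ▷ U. -/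
open CategoryTheory Bicategory

universe w v u

namespace Paper

variable (B : Type u) [Bicategory.{w, v} B]

variable {B}

/-- An object of the slice bicategory `W/A` : a 1-cell `w : C ⟶ A` in `W`. -/
structure SliceObj (W : ∀ ⦃a b : B⦄, (a ⟶ b) → Prop) (A : B) where
  C : B
  w : C ⟶ A
  mem : W w

variable {W : ∀ ⦃a b : B⦄, (a ⟶ b) → Prop} {A : B}

/-- A 1-cell of the slice bicategory `W/A` : a 1-cell `f` of `B` together with an invertible
2-cell `α : w₁ ≅ w₂ ∘ f`. -/
structure SliceHom (X Y : SliceObj W A) where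
  f : X.C ⟶ Y.C
  α : X.w ≅ f ≫ Y.w

/-- A 2-cell of the slice bicategory `W/A` : a 2-cell `ξ : f₁ ⟹ f₂` of `B` compatible with the
structure 2-cells. -/
structure Slice2 {X Y : SliceObj W A} (F G : SliceHom X Y) where
  ξ : F.f ⟶ G.f
  cond : F.α.hom ≫ (ξ ▷ Y.w) = G.α.hom

/-- Composition of 1-cells in the slice bicategory `W/A`. -/
def SliceHom.comp {X Y Z : SliceObj W A} (U : SliceHom Z X) (F : SliceHom X Y) :
    SliceHom Z Y :=
  ⟨U.f ≫ F.f, U.α ≪≫ whiskerLeftIso U.f F.α ≪≫ (α_ U.f F.f Y.w).symm⟩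

/-- Whiskering of a 2-cell of `W/A` by a 1-cell of `W/A`. -/
def SliceHom.whisk {X Y Z : SliceObj W A} (U : SliceHom Z X) {F G : SliceHom X Y}
    (Ξ : Slice2 F G) : Slice2 (U.comp F) (U.comp G) where
  ξ := U.f ◁ Ξ.ξ
  cond := by
    dsimp [SliceHom.comp, whiskerLeftIso]
    simp only [Category.assoc]
    rw [← associator_inv_naturality_middle, ← Bicategory.whiskerLeft_comp_assoc, Ξ.cond]

/-!
Each cofilteredness axiom for `W/A` comes from the corresponding fraction axiom applied to a
structure 1-cell of `W/A`, which lies in `W`. The 1-cell `u ∈ W` it provides gives the slice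
1-cell `(u, id) : (D, u ≫ X.w) → X`, whose source is in `W/A` since `W` is closed under
composition. For (2-Flt)ᵒᵖ, the invertibility of the structure 2-cells makes any two parallel
slice 2-cells `F ⟹ G : X → Y` agree after whiskering with `Y.w`.
-/

theorem RightBicalculus.id_mem (hW : RightBicalculus B W) (a : B) : W (𝟙 a) :=
  hW.equivalences _ ⟨𝟙 a, ⟨λ_ _⟩, ⟨λ_ _⟩⟩

def SliceObj.precomp (X : SliceObj W A) {D : B} (u : D ⟶ X.C) (hu : W (u ≫ X.w)) :
    SliceObj W A :=
  ⟨D, u ≫ X.w, hu⟩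

def SliceHom.ofPrecomp (X : SliceObj W A) {D : B} (u : D ⟶ X.C) (hu : W (u ≫ X.w)) :
    SliceHom (X.precomp u hu) X :=
  ⟨u, Iso.refl _⟩

@[ext]
theorem Slice2.ext {X Y : SliceObj W A} {F G : SliceHom X Y} {Ξ Θ : Slice2 F G}
    (h : Ξ.ξ = Θ.ξ) : Ξ = Θ := by
  cases Ξ; cases Θ; cases h; rfl

theorem Slice2.ξ_whiskerRight_eq {X Y : SliceObj W A} {F G : SliceHom X Y}
    (Ξ Θ : Slice2 F G) : Ξ.ξ ▷ Y.w = Θ.ξ ▷ Y.w :=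
  (cancel_epi F.α.hom).mp (Ξ.cond.trans Θ.cond.symm)

theorem SliceObj.exists_span (hW : RightBicalculus B W) (X Y : SliceObj W A) :
    ∃ (Z : SliceObj W A) (_ : SliceHom Z X), Nonempty (SliceHom Z Y) := by
  obtain ⟨D, u, h, hu, ⟨e⟩⟩ := hW.frc0 X.w Y.w X.mem
  exact ⟨Y.precomp u (hW.comp _ _ hu Y.mem), ⟨h, e⟩, ⟨SliceHom.ofPrecomp Y u _⟩⟩

/-- The hypothesis `hβ` is the conclusion of axiom (1-Frc) for `α = F.α⁻¹ ≫ G.α`. -/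
def Slice2.ofWhiskerRight {X Y Z : SliceObj W A} (U : SliceHom Z X) {F G : SliceHom X Y}
    (β : U.f ≫ F.f ⟶ U.f ≫ G.f)
    (hβ : (U.f ◁ (F.α.inv ≫ G.α.hom)) ≫ (α_ U.f G.f Y.w).inv = (α_ U.f F.f Y.w).inv ≫ β ▷ Y.w) :
    Slice2 (U.comp F) (U.comp G) where
  ξ := β
  cond := by
    simp only [SliceHom.comp, Iso.trans_hom, whiskerLeftIso_hom, Iso.symm_hom, Category.assoc]
    rw [← hβ, ← whiskerLeft_comp_assoc, F.α.hom_inv_id_assoc]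

theorem SliceHom.exists_slice2_comp (hW : RightBicalculus B W) {X Y : SliceObj W A}
    (F G : SliceHom X Y) :
    ∃ (Z : SliceObj W A) (U : SliceHom Z X), Nonempty (Slice2 (U.comp F) (U.comp G)) := by
  obtain ⟨D, u, hu, β, hβ⟩ := hW.frc1 Y.w F.f G.f Y.mem (F.α.inv ≫ G.α.hom)
  exact ⟨_, SliceHom.ofPrecomp X u (hW.comp _ _ hu X.mem), ⟨Slice2.ofWhiskerRight _ β hβ⟩⟩

theorem Slice2.exists_whisk_eq (hW : RightBicalculus B W) {X Y : SliceObj W A}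
    {F G : SliceHom X Y} (Ξ Θ : Slice2 F G) :
    ∃ (Z : SliceObj W A) (U : SliceHom Z X), U.whisk Ξ = U.whisk Θ := by
  obtain ⟨D, u, hu, h⟩ := hW.frc2 Y.w F.f G.f Y.mem Ξ.ξ Θ.ξ (Ξ.ξ_whiskerRight_eq Θ)
  exact ⟨_, SliceHom.ofPrecomp X u (hW.comp _ _ hu X.mem), Slice2.ext h⟩

/-- If `W` admits a right bicalculus of fractions, then the slice bicategory `W/A` is
cofiltered: it is non-empty and satisfies the dual axioms (0-Flt)ᵒᵖ, (1-Flt)ᵒᵖ, (2-Flt)ᵒᵖ. -/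
theorem slice_cofiltered (hW : RightBicalculus B W) (A : B) :
    Nonempty (SliceObj W A) ∧
    (∀ X Y : SliceObj W A, ∃ (Z : SliceObj W A) (_ : SliceHom Z X) (_ : SliceHom Z Y), True) ∧
    (∀ (X Y : SliceObj W A) (F G : SliceHom X Y),
      ∃ (Z : SliceObj W A) (U : SliceHom Z X), Nonempty (Slice2 (U.comp F) (U.comp G))) ∧
    (∀ (X Y : SliceObj W A) (F G : SliceHom X Y) (Ξ Θ : Slice2 F G),
      ∃ (Z : SliceObj W A) (U : SliceHom Z X), U.whisk Ξ = U.whisk Θ) := by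
  refine ⟨⟨⟨A, 𝟙 A, hW.id_mem A⟩⟩, fun X Y => ?_,
    fun X Y F G => SliceHom.exists_slice2_comp hW F G,
    fun X Y F G Ξ Θ => Slice2.exists_whisk_eq hW Ξ Θ⟩
  obtain ⟨Z, U, ⟨V⟩⟩ := SliceObj.exists_span hW X Y
  exact ⟨Z, U, V, trivial⟩

end Paper
end
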